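/- Consider an assembly with m_1, m_2, m_3 > 0 and M of positive radius of convergence, with hypotheses as in the quantitative low-rank setup (0 < r < n/2, x = 2m_1 r/(m_2(n-2r)), xρ ≤ 1/2, 2kρ³x²/m_1 ≤ 1/2 where k = n-r, y = (2m_1m_3/(3m_2²)) r²/(n-2r), u_4 = (2kρ⁴x³/m_1)·2c_0√(2πr), z = (e^y - 1) + u_4 < 1). Then (n)_{2r} m_1^{n-2r} m_2^r / (r! 2^r) ≤ p(n, n-r) ≤ (n)_{2r} m_1^{n-2r} m_2^r / (r! 2^r) · (1 + z/(1-z)). -/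

import Mathlib

/-!
The pair shape, with `n - 2r` singletons and `r` pairs, is one of the assemblies counted by
`p(n, n - r)`; its weight is the lower bound. Any other shape with `n - r` components is fixed by
its multiplicities `a_i` for `i ≥ 3`: writing `t = ∑ (i - 1) a_i` and `d = ∑ (i - 2) a_i`, it has
`r - t` pairs and `n - 2r + d` singletons. The estimates `b! b^d ≤ (b + d)!` and
`r! ≤ (r - t)! r^t` bound its weight by the pair-shape weight times `∏_{i ≥ 3} v_i^{a_i} / a_i!`
with `v_i = (m_i / i!) α^(i-1) β^(i-2)`, `α = 2r / m_2`, `β = m_1 / (n - 2r)`. Summing over all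
multiplicities gives at most `exp (∑ v_i)`. Here `v_3 = y`, and `v_i ≤ ρ^i α^(i-1) β^(i-2)` for
`i ≥ 4` is dominated by a geometric series with ratio `xρ ≤ 1/2`, whose sum is at most
`V = 2kρ⁴x³/m₁ ≤ u₄/4`. Finally `e^(y + V) ≤ e^y + 4V ≤ 1 + z`.
-/

open Finset
open scoped Nat

/-- p(n,k): the number of M-assemblies of size n with exactly k components. -/
noncomputable def assemblyCount (m : ℕ → ℝ) (n k : ℕ) : ℝ :=
  ∑ a ∈ Finset.univ.filter (fun a : Fin (n + 1) → Fin (n + 1) =>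
      (∑ i : Fin (n + 1), i.1 * (a i).1) = n ∧ (∑ i : Fin (n + 1), (a i).1) = k ∧
        (a 0).1 = 0),
    (n ! : ℝ) * ∏ i : Fin (n + 1),
      m i.1 ^ (a i).1 / (((a i).1 ! : ℝ) * ((i.1 ! : ℝ)) ^ (a i).1)

-- `a i` is the number of components of size `i`.
def assemblyShapes (n k : ℕ) : Finset (Fin (n + 1) → Fin (n + 1)) :=
  univ.filter fun a => (∑ i, i.1 * (a i).1) = n ∧ (∑ i, (a i).1) = k ∧ (a 0).1 = 0

noncomputable def assemblyWeight (m : ℕ → ℝ) (n : ℕ) (a : Fin (n + 1) → Fin (n + 1)) : ℝ :=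
  (n ! : ℝ) * ∏ i, m i.1 ^ (a i).1 / (((a i).1 ! : ℝ) * (i.1 ! : ℝ) ^ (a i).1)

theorem assemblyCount_eq_sum_assemblyWeight (m : ℕ → ℝ) (n k : ℕ) :
    assemblyCount m n k = ∑ a ∈ assemblyShapes n k, assemblyWeight m n a :=
  rfl

theorem Nat.factorial_mul_pow_le_factorial_add (b d : ℕ) : b ! * b ^ d ≤ (b + d)! :=
  (Nat.mul_le_mul_left _ (Nat.pow_le_pow_left b.le_succ d)).trans
    Nat.factorial_mul_pow_le_factorial

theorem Nat.factorial_le_factorial_sub_mul_pow {r t : ℕ} (h : t ≤ r) :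
    r ! ≤ (r - t)! * r ^ t := by
  rw [← Nat.factorial_mul_descFactorial h]
  exact Nat.mul_le_mul_left _ (Nat.descFactorial_le_pow r t)

theorem pow_div_factorial_add_le {p : ℝ} (hp : 0 ≤ p) {b : ℕ} (hb : 0 < b) (d : ℕ) :
    p ^ (b + d) / (b + d)! ≤ p ^ b / b ! * (p / b) ^ d := by
  have hb' : (0 : ℝ) < b := by exact_mod_cast hb
  rw [div_pow, pow_add, div_mul_div_comm, div_le_div_iff₀ (by positivity) (by positivity)]
  have : ((b ! * b ^ d : ℕ) : ℝ) ≤ (b + d)! := by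
    exact_mod_cast Nat.factorial_mul_pow_le_factorial_add b d
  push_cast at this
  exact mul_le_mul_of_nonneg_left this (by positivity)

theorem pow_sub_div_factorial_sub_le {q : ℝ} (hq : 0 < q) {r t : ℕ} (h : t ≤ r) :
    q ^ (r - t) / (r - t)! ≤ q ^ r / r ! * (r / q) ^ t := by
  have hr : q ^ r = q ^ (r - t) * q ^ t := by rw [← pow_add, Nat.sub_add_cancel h]
  rw [div_pow, hr, div_mul_div_comm, div_le_div_iff₀ (by positivity) (by positivity)]
  have : (r ! : ℝ) ≤ (r - t)! * r ^ t := by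
    exact_mod_cast Nat.factorial_le_factorial_sub_mul_pow h
  calc q ^ (r - t) * (r ! * q ^ t) = q ^ (r - t) * q ^ t * r ! := by ring
    _ ≤ q ^ (r - t) * q ^ t * ((r - t)! * r ^ t) := by gcongr
    _ = q ^ (r - t) * q ^ t * r ^ t * (r - t)! := by ring

theorem sum_prod_le_prod_sum_of_injOn {ι κ R : Type*} [DecidableEq ι] [Fintype κ]
    [CommSemiring R] [PartialOrder R] [IsOrderedRing R]
    (F : Finset (ι → κ)) (S : Finset ι) (g : ι → κ → R) (hg : ∀ i j, 0 ≤ g i j)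
    (hF : ∀ a ∈ F, ∀ b ∈ F, (∀ i ∈ S, a i = b i) → a = b) :
    ∑ a ∈ F, ∏ i ∈ S, g i (a i) ≤ ∏ i ∈ S, ∑ j, g i j := by
  classical
  rw [prod_sum S (fun _ => univ)]
  have hinj : ∀ a ∈ F, ∀ b ∈ F,
      (fun i (_ : i ∈ S) => a i) = (fun i _ => b i) → a = b := fun a ha b hb hab =>
    hF a ha b hb fun i hi => congrFun (congrFun hab i) hi
  calc ∑ a ∈ F, ∏ i ∈ S, g i (a i)
      = ∑ p ∈ F.image (fun a i (_ : i ∈ S) => a i),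
          ∏ x ∈ S.attach, g x.1 (p x.1 x.2) := by
        rw [sum_image hinj]
        exact sum_congr rfl fun a _ => (prod_attach S fun i => g i (a i)).symm
    _ ≤ _ := sum_le_sum_of_subset_of_nonneg (fun p _ => by simp)
        fun p _ _ => prod_nonneg fun x _ => hg _ _

def largeSizes (n : ℕ) : Finset (Fin (n + 1)) :=
  univ.filter fun i => 3 ≤ i.1

@[to_additive]
theorem prod_univ_eq_mul_prod_largeSizes {M : Type*} [CommMonoid M] {n : ℕ} (hn : 3 ≤ n)
    (f : Fin (n + 1) → M) :
    ∏ i, f i =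
      f ⟨0, by omega⟩ * f ⟨1, by omega⟩ * f ⟨2, by omega⟩ * ∏ i ∈ largeSizes n, f i := by
  rw [← prod_filter_mul_prod_filter_not univ (fun i : Fin (n + 1) => 3 ≤ i.1), mul_comm]
  have hsmall : univ.filter (fun i : Fin (n + 1) => ¬ 3 ≤ i.1) =
      {⟨0, by omega⟩, ⟨1, by omega⟩, ⟨2, by omega⟩} := by
    ext i
    simp only [mem_filter, mem_univ, true_and, mem_insert, mem_singleton, Fin.ext_iff]
    omega
  rw [hsmall, prod_insert (by simp [Fin.ext_iff]), prod_insert (by simp [Fin.ext_iff]),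
    prod_singleton, largeSizes]
  simp only [mul_assoc]

theorem mem_assemblyShapes_iff {n k : ℕ} (hn : 3 ≤ n) {a : Fin (n + 1) → Fin (n + 1)} :
    a ∈ assemblyShapes n k ↔ (a 0).1 = 0 ∧
      (a ⟨1, by omega⟩).1 + 2 * (a ⟨2, by omega⟩).1 + ∑ i ∈ largeSizes n, i.1 * (a i).1 = n ∧
      (a ⟨1, by omega⟩).1 + (a ⟨2, by omega⟩).1 + ∑ i ∈ largeSizes n, (a i).1 = k := by
  have h0 : (⟨0, by omega⟩ : Fin (n + 1)) = 0 := rfl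
  simp only [assemblyShapes, mem_filter, mem_univ, true_and, sum_univ_eq_add_sum_largeSizes hn,
    h0]
  constructor
  · rintro ⟨h1, h2, h3⟩; refine ⟨h3, ?_, ?_⟩ <;> simp_all
  · rintro ⟨h1, h2, h3⟩; refine ⟨?_, ?_, h1⟩ <;> simp_all

theorem assemblyWeight_eq {n : ℕ} (hn : 3 ≤ n) (m : ℕ → ℝ) {a : Fin (n + 1) → Fin (n + 1)}
    (ha : (a 0).1 = 0) :
    assemblyWeight m n a = n ! * (m 1 ^ (a ⟨1, by omega⟩).1 / (a ⟨1, by omega⟩).1 !) *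
      ((m 2 / 2) ^ (a ⟨2, by omega⟩).1 / (a ⟨2, by omega⟩).1 !) *
      ∏ i ∈ largeSizes n, (m i / i.1 !) ^ (a i).1 / (a i).1 ! := by
  have h0 : (⟨0, by omega⟩ : Fin (n + 1)) = 0 := rfl
  rw [assemblyWeight, prod_univ_eq_mul_prod_largeSizes hn, h0, ha]
  simp only [div_pow, pow_zero, Nat.factorial_zero, Nat.cast_one, one_pow, mul_one, div_one,
    one_mul, Nat.factorial_one, Nat.factorial_two, Nat.cast_ofNat]
  simp only [div_div, mul_comm _ ((_ : ℕ)! : ℝ)]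
  ring

-- `Fin.ofNat` reduces modulo `n + 1`, so the multiplicities are the intended ones when `2r ≤ n`.
def pairShape (n r : ℕ) : Fin (n + 1) → Fin (n + 1) :=
  fun i => if i.1 = 1 then Fin.ofNat (n + 1) (n - 2 * r)
    else if i.1 = 2 then Fin.ofNat (n + 1) r else 0

theorem pairShape_apply_of_mem_largeSizes {n r : ℕ} {i : Fin (n + 1)} (hi : i ∈ largeSizes n) :
    (pairShape n r i).1 = 0 := by
  have : 3 ≤ i.1 := (mem_filter.1 hi).2
  simp [pairShape, show i.1 ≠ 1 by omega, show i.1 ≠ 2 by omega]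

section PairShape

variable {n r : ℕ} (hn : 3 ≤ n) (hrn : 2 * r ≤ n)
include hn hrn

theorem pairShape_apply_one : (pairShape n r ⟨1, by omega⟩).1 = n - 2 * r := by
  simp [pairShape, Nat.mod_eq_of_lt (show n - 2 * r < n + 1 by omega)]

theorem pairShape_apply_two : (pairShape n r ⟨2, by omega⟩).1 = r := by
  simp [pairShape, Nat.mod_eq_of_lt (show r < n + 1 by omega)]

theorem pairShape_mem_assemblyShapes : pairShape n r ∈ assemblyShapes n (n - r) := by
  rw [mem_assemblyShapes_iff hn, pairShape_apply_one hn hrn, pairShape_apply_two hn hrn,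
    sum_eq_zero fun i hi => by rw [pairShape_apply_of_mem_largeSizes hi, mul_zero],
    sum_eq_zero fun i hi => pairShape_apply_of_mem_largeSizes hi]
  exact ⟨by simp [pairShape], by omega, by omega⟩

theorem assemblyWeight_pairShape (m : ℕ → ℝ) :
    assemblyWeight m n (pairShape n r) =
      n ! * (m 1 ^ (n - 2 * r) / (n - 2 * r)!) * ((m 2 / 2) ^ r / r !) := by
  rw [assemblyWeight_eq hn m (by simp [pairShape]), pairShape_apply_one hn hrn,
    pairShape_apply_two hn hrn,
    prod_eq_one fun i hi => by rw [pairShape_apply_of_mem_largeSizes hi]; simp, mul_one]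

end PairShape

theorem assemblyWeight_nonneg {m : ℕ → ℝ} (hm : ∀ i, 0 ≤ m i) (n : ℕ)
    (a : Fin (n + 1) → Fin (n + 1)) : 0 ≤ assemblyWeight m n a :=
  mul_nonneg (Nat.cast_nonneg _)
    (prod_nonneg fun i _ => div_nonneg (pow_nonneg (hm _) _) (by positivity))

theorem assemblyWeight_pairShape_le_assemblyCount {m : ℕ → ℝ} (hm : ∀ i, 0 ≤ m i) {n r : ℕ}
    (hn : 3 ≤ n) (hrn : 2 * r ≤ n) :
    assemblyWeight m n (pairShape n r) ≤ assemblyCount m n (n - r) :=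
  single_le_sum (fun a _ => assemblyWeight_nonneg hm n a) (pairShape_mem_assemblyShapes hn hrn)

/- Relative to the pair shape, a component of size `i` replaces `i - 1` pairs by `i - 2`
singletons; removing a pair costs at most a factor `α`, adding a singleton at most `β`. -/
noncomputable def tailRate (m : ℕ → ℝ) (α β : ℝ) (i : ℕ) : ℝ :=
  m i / i ! * α ^ (i - 1) * β ^ (i - 2)

theorem tailRate_nonneg {m : ℕ → ℝ} (hm : ∀ i, 0 ≤ m i) {α β : ℝ} (hα : 0 ≤ α) (hβ : 0 ≤ β)
    (i : ℕ) : 0 ≤ tailRate m α β i := by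
  have := hm i; unfold tailRate; positivity

theorem prod_mul_pow_sum_eq_prod_tailRate {ι : Type*} (s : Finset ι) (m : ℕ → ℝ) (α β : ℝ)
    (size mult : ι → ℕ) :
    (∏ i ∈ s, (m (size i) / (size i)!) ^ mult i / (mult i)!) *
        (α ^ (∑ i ∈ s, (size i - 1) * mult i) * β ^ (∑ i ∈ s, (size i - 2) * mult i)) =
      ∏ i ∈ s, tailRate m α β (size i) ^ mult i / (mult i)! := by
  simp only [← prod_pow_eq_pow_sum, pow_mul, ← prod_mul_distrib]
  exact prod_congr rfl fun i _ => by rw [tailRate, mul_pow, mul_pow]; ring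

theorem assemblyWeight_le_pairShape_mul_prod_tailRate {m : ℕ → ℝ} (hm : ∀ i, 0 ≤ m i)
    (h1 : 0 < m 1) (h2 : 0 < m 2) {n r : ℕ} (hn : 3 ≤ n) (hrn : 2 * r < n)
    {a : Fin (n + 1) → Fin (n + 1)} (ha : a ∈ assemblyShapes n (n - r)) :
    assemblyWeight m n a ≤ assemblyWeight m n (pairShape n r) *
      ∏ i ∈ largeSizes n,
        tailRate m (2 * r / m 2) (m 1 / (n - 2 * r)) i ^ (a i).1 / (a i).1 ! := by
  obtain ⟨h0, hsize, hcount⟩ := (mem_assemblyShapes_iff hn).1 ha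
  set t := ∑ i ∈ largeSizes n, (i.1 - 1) * (a i).1
  set d := ∑ i ∈ largeSizes n, (i.1 - 2) * (a i).1
  have hL : ∀ i ∈ largeSizes n, 3 ≤ i.1 := fun i hi => (mem_filter.1 hi).2
  have hst : ∑ i ∈ largeSizes n, i.1 * (a i).1 = t + ∑ i ∈ largeSizes n, (a i).1 := by
    rw [← sum_add_distrib]
    refine sum_congr rfl fun i hi => ?_
    have := hL i hi
    rw [← Nat.succ_mul, Nat.succ_eq_add_one, Nat.sub_add_cancel (by omega)]
  have htd : t = d + ∑ i ∈ largeSizes n, (a i).1 := by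
    rw [← sum_add_distrib]
    refine sum_congr rfl fun i hi => ?_
    have := hL i hi
    rw [← Nat.succ_mul, Nat.succ_eq_add_one, show i.1 - 2 + 1 = i.1 - 1 by omega]
  have ha2 : (a ⟨2, by omega⟩).1 = r - t := by omega
  have ha1 : (a ⟨1, by omega⟩).1 = (n - 2 * r) + d := by omega
  have htr : t ≤ r := by omega
  rw [assemblyWeight_eq hn m h0, assemblyWeight_pairShape hn hrn.le, ha1, ha2,
    ← prod_mul_pow_sum_eq_prod_tailRate, show (2 * r / m 2 : ℝ) = r / (m 2 / 2) by ring,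
    show (n - 2 * r : ℝ) = (n - 2 * r : ℕ) by rw [Nat.cast_sub hrn.le]; push_cast; ring]
  have hP : 0 ≤ ∏ i ∈ largeSizes n, (m i / i.1 !) ^ (a i).1 / (a i).1 ! :=
    prod_nonneg fun i _ => by have := hm i; positivity
  calc (n ! : ℝ) * (m 1 ^ (n - 2 * r + d) / (n - 2 * r + d)!) *
        ((m 2 / 2) ^ (r - t) / (r - t)!) * ∏ i ∈ largeSizes n, (m i / i.1 !) ^ (a i).1 / (a i).1 !
      ≤ n ! * (m 1 ^ (n - 2 * r) / (n - 2 * r)! * (m 1 / (n - 2 * r : ℕ)) ^ d) *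
        ((m 2 / 2) ^ r / r ! * (r / (m 2 / 2)) ^ t) *
        ∏ i ∈ largeSizes n, (m i / i.1 !) ^ (a i).1 / (a i).1 ! := by
        gcongr
        · exact pow_div_factorial_add_le h1.le (by omega) d
        · exact pow_sub_div_factorial_sub_le (by positivity) htr
    _ = _ := by ring

theorem eq_of_mem_assemblyShapes_of_eqOn_largeSizes {n k : ℕ} (hn : 3 ≤ n)
    {a b : Fin (n + 1) → Fin (n + 1)} (ha : a ∈ assemblyShapes n k)
    (hb : b ∈ assemblyShapes n k)
    (hab : ∀ i ∈ largeSizes n, a i = b i) : a = b := by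
  obtain ⟨ha0, ha1, ha2⟩ := (mem_assemblyShapes_iff hn).1 ha
  obtain ⟨hb0, hb1, hb2⟩ := (mem_assemblyShapes_iff hn).1 hb
  have hsum : ∀ f : Fin (n + 1) → ℕ, ∑ i ∈ largeSizes n, f i * (a i).1 =
      ∑ i ∈ largeSizes n, f i * (b i).1 := fun f => sum_congr rfl fun i hi => by rw [hab i hi]
  have hsize := hsum fun i => i.1
  have hcount := hsum fun _ => 1
  simp only [one_mul] at hcount
  funext i
  by_cases hi : 3 ≤ i.1
  · exact hab i (mem_filter.2 ⟨mem_univ _, hi⟩)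
  · apply Fin.ext
    obtain ⟨j, hj⟩ := i
    interval_cases j
    · exact ha0.trans hb0.symm
    · omega
    · omega

theorem sum_prod_pow_div_factorial_le_exp {n k : ℕ} (hn : 3 ≤ n) {v : ℕ → ℝ}
    (hv : ∀ j, 0 ≤ v j) :
    ∑ a ∈ assemblyShapes n k, ∏ i ∈ largeSizes n, v i ^ (a i).1 / (a i).1 ! ≤
      Real.exp (∑ j ∈ Ico 3 (n + 1), v j) := by
  have hIco : ∑ i ∈ largeSizes n, v i = ∑ j ∈ Ico 3 (n + 1), v j := by
    rw [largeSizes, sum_filter, Fin.sum_univ_eq_sum_range (fun j => if 3 ≤ j then v j else 0),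
      ← sum_filter]
    congr 1
    ext j
    simp only [mem_filter, mem_range, mem_Ico]
    omega
  calc ∑ a ∈ assemblyShapes n k, ∏ i ∈ largeSizes n, v i ^ (a i).1 / (a i).1 !
      ≤ ∏ i ∈ largeSizes n, ∑ c : Fin (n + 1), v i ^ c.1 / c.1 ! :=
        sum_prod_le_prod_sum_of_injOn _ (largeSizes n)
          (fun i (c : Fin (n + 1)) => v i ^ c.1 / c.1 !) (fun i c => by have := hv i; positivity)
          fun a ha b hb => eq_of_mem_assemblyShapes_of_eqOn_largeSizes hn ha hb
    _ ≤ ∏ i ∈ largeSizes n, Real.exp (v i) := by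
        refine prod_le_prod (fun i _ => sum_nonneg fun c _ => by have := hv i; positivity)
          fun i _ => ?_
        rw [Fin.sum_univ_eq_sum_range (fun j => v i ^ j / j !)]
        exact Real.sum_le_exp_of_nonneg (hv i) _
    _ = Real.exp (∑ j ∈ Ico 3 (n + 1), v j) := by rw [← Real.exp_sum, hIco]

theorem assemblyCount_le_pairShape_mul_exp {m : ℕ → ℝ} (hm : ∀ i, 0 ≤ m i) (h1 : 0 < m 1)
    (h2 : 0 < m 2) {n r : ℕ} (hn : 3 ≤ n) (hrn : 2 * r < n) :
    assemblyCount m n (n - r) ≤ assemblyWeight m n (pairShape n r) *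
      Real.exp (∑ j ∈ Ico 3 (n + 1), tailRate m (2 * r / m 2) (m 1 / (n - 2 * r)) j) := by
  have hW : 0 ≤ assemblyWeight m n (pairShape n r) := assemblyWeight_nonneg hm n _
  have hb : (0 : ℝ) ≤ n - 2 * r := by
    rw [sub_nonneg]; exact_mod_cast hrn.le
  have hv := tailRate_nonneg hm (by positivity : (0 : ℝ) ≤ 2 * r / m 2) (div_nonneg h1.le hb)
  rw [assemblyCount_eq_sum_assemblyWeight]
  calc _ ≤ ∑ a ∈ assemblyShapes n (n - r), assemblyWeight m n (pairShape n r) *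
          ∏ i ∈ largeSizes n,
            tailRate m (2 * r / m 2) (m 1 / (n - 2 * r)) i ^ (a i).1 / (a i).1 ! :=
        sum_le_sum fun a ha => assemblyWeight_le_pairShape_mul_prod_tailRate hm h1 h2 hn hrn ha
    _ ≤ _ := by
        rw [← mul_sum]
        exact mul_le_mul_of_nonneg_left (sum_prod_pow_div_factorial_le_exp hn hv) hW

theorem assemblyWeight_pairShape_eq_descFactorial {n r : ℕ} (hn : 3 ≤ n) (hrn : 2 * r ≤ n)
    (m : ℕ → ℝ) :
    assemblyWeight m n (pairShape n r) =
      n.descFactorial (2 * r) * m 1 ^ (n - 2 * r) * m 2 ^ r / (r ! * 2 ^ r) := by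
  rw [assemblyWeight_pairShape hn hrn, ← Nat.factorial_mul_descFactorial hrn, div_pow]
  push_cast
  field_simp

theorem geom_sum_le_two {q : ℝ} (h0 : 0 ≤ q) (h : q ≤ 1 / 2) (N : ℕ) :
    ∑ i ∈ range N, q ^ i ≤ 2 := by
  calc ∑ i ∈ range N, q ^ i ≤ q ^ 0 / (1 - q) := by
        rw [range_eq_Ico]; exact geom_sum_Ico_le_of_lt_one h0 (by linarith)
    _ ≤ 2 := by rw [pow_zero, div_le_iff₀ (by linarith)]; linarith

theorem sum_Ico_tailRate_le {m : ℕ → ℝ} {ρ α β : ℝ} (hρ0 : 0 ≤ ρ)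
    (hρ : ∀ i, 3 ≤ i → m i / i ! ≤ ρ ^ i) (hα : 0 ≤ α) (hβ : 0 ≤ β) (hq : α * β * ρ ≤ 1 / 2)
    {N : ℕ} (hN : 3 < N) :
    ∑ j ∈ Ico 3 N, tailRate m α β j ≤ tailRate m α β 3 + 2 * (ρ ^ 4 * α ^ 3 * β ^ 2) := by
  have hterm : ∀ i, tailRate m α β (4 + i) ≤ ρ ^ 4 * α ^ 3 * β ^ 2 * (α * β * ρ) ^ i := by
    intro i
    calc tailRate m α β (4 + i) = m (4 + i) / (4 + i)! * (α ^ (3 + i) * β ^ (2 + i)) := by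
          rw [tailRate, show 4 + i - 1 = 3 + i by omega, show 4 + i - 2 = 2 + i by omega,
            mul_assoc]
      _ ≤ ρ ^ (4 + i) * (α ^ (3 + i) * β ^ (2 + i)) := by gcongr; exact hρ _ (by omega)
      _ = ρ ^ 4 * α ^ 3 * β ^ 2 * (α * β * ρ) ^ i := by ring
  rw [sum_eq_sum_Ico_succ_bot hN, add_le_add_iff_left, sum_Ico_eq_sum_range]
  calc ∑ i ∈ range (N - 4), tailRate m α β (4 + i)
      ≤ ∑ i ∈ range (N - 4), ρ ^ 4 * α ^ 3 * β ^ 2 * (α * β * ρ) ^ i :=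
        sum_le_sum fun i _ => hterm i
    _ ≤ ρ ^ 4 * α ^ 3 * β ^ 2 * 2 := by
        rw [← mul_sum]; gcongr; exact geom_sum_le_two (by positivity) hq _
    _ = 2 * (ρ ^ 4 * α ^ 3 * β ^ 2) := by ring

theorem four_le_two_mul_exp_one_div_sqrt_mul_sqrt {r : ℝ} (hr : 1 ≤ r) :
    4 ≤ 2 * (Real.exp 1 / Real.sqrt (2 * Real.pi)) * Real.sqrt (2 * Real.pi * r) := by
  have hsqrt : 2 * (Real.exp 1 / Real.sqrt (2 * Real.pi)) * Real.sqrt (2 * Real.pi * r) =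
      2 * Real.exp 1 * Real.sqrt r := by
    rw [Real.sqrt_mul (by positivity) r]; field_simp
  rw [hsqrt]
  nlinarith [Real.exp_one_gt_two, Real.one_le_sqrt.2 hr]

theorem Real.exp_add_le_exp_add {y V u : ℝ} (hy : 0 ≤ y) (hV : 0 ≤ V) (hu : 4 * V ≤ u)
    (h : Real.exp y + u < 2) : Real.exp (y + V) ≤ Real.exp y + u := by
  have hey : 1 ≤ Real.exp y := Real.one_le_exp hy
  have hexpV : Real.exp V - 1 ≤ 2 * V := by
    have := Real.abs_exp_sub_one_le (x := V) (by rw [abs_of_nonneg hV]; linarith)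
    rwa [abs_of_nonneg (by linarith [Real.add_one_le_exp V]), abs_of_nonneg hV] at this
  calc Real.exp (y + V) = Real.exp y + Real.exp y * (Real.exp V - 1) := by
        rw [Real.exp_add]; ring
    _ ≤ Real.exp y + 2 * (2 * V) := by
        gcongr
        · linarith [Real.add_one_le_exp V]
        · linarith
    _ ≤ Real.exp y + u := by linarith

theorem sum_Ico_tailRate_le_add {m : ℕ → ℝ} (h1 : 0 < m 1) (h2 : 0 < m 2) {ρ : ℝ} (hρ0 : 0 ≤ ρ)
    (hρ : ∀ i, 3 ≤ i → m i / (i ! : ℝ) ≤ ρ ^ i) {n r k : ℕ} (hn : 3 ≤ n) (hrn : 2 * r < n)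
    (hk : k = n - r) {x y : ℝ} (hx : x = 2 * m 1 * r / (m 2 * (n - 2 * r))) (hxρ : x * ρ ≤ 1 / 2)
    (hy : y = 2 * m 1 * m 3 / (3 * m 2 ^ 2) * r ^ 2 / (n - 2 * r)) :
    ∑ j ∈ Ico 3 (n + 1), tailRate m (2 * r / m 2) (m 1 / (n - 2 * r)) j ≤
      y + 2 * k * ρ ^ 4 * x ^ 3 / m 1 := by
  have hb : (0 : ℝ) < n - 2 * r := by rw [sub_pos]; exact_mod_cast hrn
  obtain ⟨α, hα_def⟩ : ∃ α : ℝ, α = 2 * r / m 2 := ⟨_, rfl⟩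
  obtain ⟨β, hβ_def⟩ : ∃ β : ℝ, β = m 1 / (n - 2 * r) := ⟨_, rfl⟩
  rw [← hα_def, ← hβ_def]
  have hα0 : 0 ≤ α := by rw [hα_def]; positivity
  have hβ0 : 0 ≤ β := by rw [hβ_def]; exact div_nonneg h1.le hb.le
  have hαβ : α * β = x := by rw [hα_def, hβ_def, hx]; field_simp
  have hα : α ≤ x * k / m 1 := by
    have hbk : (n : ℝ) - 2 * r ≤ k := by rw [hk, Nat.cast_sub (by omega)]; linarith
    calc α = x * (n - 2 * r) / m 1 := by rw [← hαβ, hβ_def]; field_simp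
      _ ≤ x * k / m 1 := by gcongr; exact hαβ ▸ mul_nonneg hα0 hβ0
  have hy3 : tailRate m α β 3 = y := by
    rw [tailRate, hy, hα_def, hβ_def]; norm_num [Nat.factorial]; field_simp; ring
  have htail : 2 * (ρ ^ 4 * α ^ 3 * β ^ 2) ≤ 2 * k * ρ ^ 4 * x ^ 3 / m 1 := by
    calc 2 * (ρ ^ 4 * α ^ 3 * β ^ 2) = 2 * ρ ^ 4 * (α * β) ^ 2 * α := by ring
      _ ≤ 2 * ρ ^ 4 * (α * β) ^ 2 * (x * k / m 1) := by gcongr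
      _ = 2 * k * ρ ^ 4 * x ^ 3 / m 1 := by rw [hαβ]; ring
  have := sum_Ico_tailRate_le hρ0 hρ hα0 hβ0 (by rwa [hαβ]) (show 3 < n + 1 by omega)
  linarith

theorem stmt_18_general (m : ℕ → ℝ) (hm : ∀ i, 0 ≤ m i)
    (h1 : 0 < m 1) (h2 : 0 < m 2)
    (ρ : ℝ) (hρ0 : 0 ≤ ρ) (hρ : ∀ i, 3 ≤ i → m i / (i ! : ℝ) ≤ ρ ^ i)
    (n r k : ℕ) (hr : 0 < r) (hrn : 2 * r < n) (hk : k = n - r)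
    (x : ℝ) (hx : x = 2 * m 1 * (r : ℝ) / (m 2 * ((n : ℝ) - 2 * r)))
    (hxρ : x * ρ ≤ 1 / 2)
    (y u₄ z : ℝ)
    (hy : y = 2 * m 1 * m 3 / (3 * (m 2) ^ 2) * (r : ℝ) ^ 2 / ((n : ℝ) - 2 * r))
    (hu : u₄ = (2 * (k : ℝ) * ρ ^ 4 * x ^ 3 / m 1) *
        (2 * (Real.exp 1 / Real.sqrt (2 * Real.pi)) * Real.sqrt (2 * Real.pi * r)))
    (hz : z = (Real.exp y - 1) + u₄) (hz1 : z < 1) :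
    (n.descFactorial (2 * r) : ℝ) * m 1 ^ (n - 2 * r) * m 2 ^ r / ((r ! : ℝ) * 2 ^ r) ≤
        assemblyCount m n (n - r) ∧
      assemblyCount m n (n - r) ≤
        (n.descFactorial (2 * r) : ℝ) * m 1 ^ (n - 2 * r) * m 2 ^ r / ((r ! : ℝ) * 2 ^ r) *
          (1 + z / (1 - z)) := by
  have hn : 3 ≤ n := by omega
  have hb : (0 : ℝ) ≤ n - 2 * r := by rw [sub_nonneg]; exact_mod_cast hrn.le
  have hx0 : 0 ≤ x := by rw [hx]; exact div_nonneg (by positivity) (mul_nonneg h2.le hb)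
  set V : ℝ := 2 * k * ρ ^ 4 * x ^ 3 / m 1
  have hV0 : 0 ≤ V := by positivity
  have hVu : 4 * V ≤ u₄ := by
    rw [hu, mul_comm 4]
    exact mul_le_mul_of_nonneg_left
      (four_le_two_mul_exp_one_div_sqrt_mul_sqrt (by exact_mod_cast hr)) hV0
  have hy0 : 0 ≤ y := by rw [hy]; have := hm 3; exact div_nonneg (by positivity) hb
  have hexp : Real.exp (∑ j ∈ Ico 3 (n + 1), tailRate m (2 * r / m 2) (m 1 / (n - 2 * r)) j) ≤
      1 + z :=
    calc _ ≤ Real.exp (y + V) :=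
          Real.exp_le_exp.2 (sum_Ico_tailRate_le_add h1 h2 hρ0 hρ hn hrn hk hx hxρ hy)
      _ ≤ Real.exp y + u₄ := Real.exp_add_le_exp_add hy0 hV0 hVu (by linarith)
      _ = 1 + z := by rw [hz]; ring
  have hW := assemblyWeight_pairShape_eq_descFactorial hn hrn.le m
  have hupper := assemblyCount_le_pairShape_mul_exp hm h1 h2 hn hrn
  rw [hW] at hupper
  refine ⟨hW ▸ assemblyWeight_pairShape_le_assemblyCount hm hn hrn.le,
    hupper.trans (mul_le_mul_of_nonneg_left (hexp.trans ?_)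
      (hW ▸ assemblyWeight_nonneg hm n _))⟩
  rw [add_le_add_iff_left, le_div_iff₀ (by linarith)]
  nlinarith [sq_nonneg z]

/-- quantitative two-sided bound for p(n, n-r) in the quantitative
low-rank setup: (n)_{2r} m1^{n-2r} m2^r/(r! 2^r) ≤ p(n,n-r) ≤
(n)_{2r} m1^{n-2r} m2^r/(r! 2^r)·(1 + z/(1-z)), where
y = (2m1m3/(3m2²))·r²/(n-2r), u₄ = (2kρ⁴x³/m1)·2c₀√(2πr), z = (e^y-1)+u₄ < 1. -/
theorem stmt_18 (m : ℕ → ℝ) (hm : ∀ i, 0 ≤ m i)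
    (h1 : 0 < m 1) (h2 : 0 < m 2) (h3 : 0 < m 3)
    (ρ : ℝ) (hρ0 : 0 ≤ ρ) (hρ : ∀ i, 3 ≤ i → m i / (i ! : ℝ) ≤ ρ ^ i)
    (n r k : ℕ) (hr : 0 < r) (hrn : 2 * r < n) (hk : k = n - r)
    (x : ℝ) (hx : x = 2 * m 1 * (r : ℝ) / (m 2 * ((n : ℝ) - 2 * r)))
    (hxρ : x * ρ ≤ 1 / 2)
    (hsmall : 2 * (k : ℝ) * ρ ^ 3 * x ^ 2 / m 1 ≤ 1 / 2)
    (y u₄ z : ℝ)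
    (hy : y = 2 * m 1 * m 3 / (3 * (m 2) ^ 2) * (r : ℝ) ^ 2 / ((n : ℝ) - 2 * r))
    (hu : u₄ = (2 * (k : ℝ) * ρ ^ 4 * x ^ 3 / m 1) *
        (2 * (Real.exp 1 / Real.sqrt (2 * Real.pi)) * Real.sqrt (2 * Real.pi * r)))
    (hz : z = (Real.exp y - 1) + u₄) (hz1 : z < 1) :
    (n.descFactorial (2 * r) : ℝ) * m 1 ^ (n - 2 * r) * m 2 ^ r / ((r ! : ℝ) * 2 ^ r) ≤
        assemblyCount m n (n - r) ∧
      assemblyCount m n (n - r) ≤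
        (n.descFactorial (2 * r) : ℝ) * m 1 ^ (n - 2 * r) * m 2 ^ r / ((r ! : ℝ) * 2 ^ r) *
          (1 + z / (1 - z)) :=
  stmt_18_general m hm h1 h2 ρ hρ0 hρ n r k hr hrn hk x hx hxρ y u₄ z hy hu hz hz1
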